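/- Let T be an ω₁-tree and H : T → 2^{≤ω₁} with x <_T y implying H(x) ⊆ H(y). Suppose x ∈ T with H(x) ∈ 2^{<ω₁} and for every ζ with ht_T(x) < ζ < ω₁ there exists y ∈ T_ζ with x <_T y and H(y) = H(x). Let U = {y ∈ T : y ≤_T x, or (x ≤_T y and H(y) = H(x))}. Then U is an uncountable downward-closed subtree of T, and if additionally H satisfies that every cofinal branch b of T and every ζ < ω₁ admit y ∈ b with dom(H(y)) ≥ ζ, then U contains no cofinal branch of T; hence U is an Aronszajn subtree. -/

import Mathlib

noncomputable section

/-- The ordinal ω₁. -/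
def w1 : Ordinal.{0} := (Cardinal.aleph 1).ord

/-- A binary sequence with ordinal domain: an element of `2^{≤Ord}`.
Values beyond the domain are normalized to `false`. -/
structure BSeq where
  dom : Ordinal.{0}
  val : Ordinal.{0} → Bool
  norm : ∀ i, dom ≤ i → val i = false

namespace BSeq

/-- `s.Ext t` means `s` is an initial segment of `t` (i.e. `s ⊆ t` as functions). -/
def Ext (s t : BSeq) : Prop := s.dom ≤ t.dom ∧ ∀ i < s.dom, s.val i = t.val i

/-- The empty sequence. -/
def nil : BSeq := ⟨0, fun _ => false, fun _ _ => rfl⟩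

/-- Restriction of a sequence to (its intersection with) an ordinal `α`. -/
def restrict (s : BSeq) (α : Ordinal) : BSeq where
  dom := min α s.dom
  val := fun i => if i < α ∧ i < s.dom then s.val i else false
  norm := by
    intro i hi
    have hc : ¬(i < α ∧ i < s.dom) := by
      rintro ⟨h1, h2⟩
      rcases min_le_iff.mp hi with h | h
      · exact absurd h1 (not_lt.mpr h)
      · exact absurd h2 (not_lt.mpr h)
    simp [hc]

end BSeq

/-- `b` is a cofinal branch of the tree `(T, <)` with height function `ht`:
a downward-closed chain meeting every level below ω₁. -/
def IsBranch {T : Type} [PartialOrder T] (ht : T → Ordinal) (b : Set T) : Prop :=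
  IsChain (· ≤ ·) b ∧ (∀ x ∈ b, ∀ y, y < x → y ∈ b) ∧ ∀ α < w1, ∃ x ∈ b, ht x = α

/-- `(T, <)` together with the height function `ht` is a set-theoretic tree of
height ω₁: heights are countable ordinals, the strict order raises height, the
predecessors of any node are linearly ordered with exactly one on each lower
level, and every level below ω₁ is nonempty. -/
structure IsTreeW1 {T : Type} [PartialOrder T] (ht : T → Ordinal) : Prop where
  ht_lt : ∀ x : T, ht x < w1
  lt_ht : ∀ {x y : T}, x < y → ht x < ht y
  pred_linear : ∀ {x y z : T}, x < z → y < z → x ≤ y ∨ y ≤ x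
  pred_exists : ∀ z : T, ∀ α < ht z, ∃ x : T, x < z ∧ ht x = α
  height_w1 : ∀ α < w1, ∃ x : T, ht x = α

/-- The space of cofinal branches of the tree. -/
abbrev Branches {T : Type} [PartialOrder T] (ht : T → Ordinal) : Type :=
  {b : Set T // IsBranch ht b}

/-- The cone topology on the space of cofinal branches. -/
def coneTop {T : Type} [PartialOrder T] (ht : T → Ordinal) :
    TopologicalSpace (Branches ht) :=
  TopologicalSpace.generateFrom
    {S : Set (Branches ht) | ∃ x : T, S = {b : Branches ht | x ∈ b.1}}


lemma BSeq.ext_antisymm {s t : BSeq} (h1 : s.Ext t) (h2 : t.Ext s) : s = t := by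
  obtain ⟨hd1, hv1⟩ := h1
  obtain ⟨hd2, hv2⟩ := h2
  have hdom : s.dom = t.dom := le_antisymm hd1 hd2
  cases s with | mk sd sv sn =>
  cases t with | mk td tv tn =>
  simp only at hdom hv1
  subst hdom
  have : sv = tv := by
    funext i
    by_cases h : i < sd
    · exact hv1 i h
    · rw [sn i (not_lt.mp h), tn i (not_lt.mp h)]
  simp [this]

lemma w1_isLimit : Order.IsSuccLimit (w1 : Ordinal) :=
  Cardinal.isSuccLimit_ord (Cardinal.aleph0_le_aleph 1)

lemma not_countable_Ioo (α : Ordinal) (hα : α < w1) : ¬ (Set.Ioo α w1).Countable := by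
  intro hc
  have h1 : (Set.Iio (α + 1)).Countable := by
    rw [← Cardinal.le_aleph0_iff_set_countable, Ordinal.mk_Iio_ordinal]
    have : (α + 1).card ≤ Cardinal.aleph0 := by
      have : α + 1 < w1 := w1_isLimit.succ_lt hα
      have h := Cardinal.lt_ord.mp this
      rwa [← Cardinal.succ_aleph0, Order.lt_succ_iff] at h
    simpa using Cardinal.lift_le.mpr this
  have h2 : (Set.Iio w1).Countable := by
    have hsub : Set.Iio w1 ⊆ Set.Iio (α + 1) ∪ Set.Ioo α w1 := by
      intro ζ hζ
      rcases lt_or_ge ζ (α + 1) with h | h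
      · exact Or.inl h
      · exact Or.inr ⟨lt_of_lt_of_le (lt_add_one α) h, hζ⟩
    exact ((h1.union hc)).mono hsub
  have := h2.le_aleph0
  rw [Ordinal.mk_Iio_ordinal] at this
  simp only [w1, Cardinal.card_ord] at this
  have : Cardinal.aleph.{1} 1 ≤ Cardinal.aleph0.{1} := by simpa using this
  exact absurd this (by simp [Cardinal.aleph0_lt_aleph_one.not_ge])

/-- with `H` monotone on an ω₁-tree, if `x` has `H(x) ∈ 2^{<ω₁}`
and on every level above `x` there is a node above `x` with the same `H`-value,
then `U = {y : y ≤ x, or x ≤ y and H(y) = H(x)}` is an uncountable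
downward-closed subtree; and if moreover the domains of `H` are unbounded
along every cofinal branch, then `U` contains no cofinal branch (so `U` is an
Aronszajn subtree). -/
theorem stmt18 {T : Type} [PartialOrder T] (ht : T → Ordinal) (htree : IsTreeW1 ht)
    (hcount : ∀ α : Ordinal, {x : T | ht x = α}.Countable)
    (H : T → BSeq) (hdom : ∀ x : T, (H x).dom ≤ w1)
    (hmono : ∀ x y : T, x < y → (H x).Ext (H y))
    (x : T) (hx : (H x).dom < w1)
    (hlev : ∀ ζ : Ordinal, ht x < ζ → ζ < w1 → ∃ y : T, ht y = ζ ∧ x < y ∧ H y = H x) :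
    ¬ ({y : T | y ≤ x ∨ (x ≤ y ∧ H y = H x)}).Countable ∧
    (∀ y ∈ {y : T | y ≤ x ∨ (x ≤ y ∧ H y = H x)}, ∀ z : T, z < y →
      z ∈ {y : T | y ≤ x ∨ (x ≤ y ∧ H y = H x)}) ∧
    ((∀ b : Set T, IsBranch ht b → ∀ ζ < w1, ∃ y ∈ b, ζ ≤ (H y).dom) →
      ∀ b : Set T, IsBranch ht b →
        ¬ b ⊆ {y : T | y ≤ x ∨ (x ≤ y ∧ H y = H x)}) := by
  
  have hdc : ∀ y ∈ {y : T | y ≤ x ∨ (x ≤ y ∧ H y = H x)}, ∀ z : T, z < y →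
      z ∈ {y : T | y ≤ x ∨ (x ≤ y ∧ H y = H x)} := by
    intro y hy z hzy
    rcases hy with hy | ⟨hxy, hH⟩
    · exact Or.inl (le_of_lt (lt_of_lt_of_le hzy hy))
    · rcases eq_or_lt_of_le hxy with rfl | hxy
      · exact Or.inl hzy.le
      · rcases htree.pred_linear hzy hxy with h | h
        · exact Or.inl h
        · refine Or.inr ⟨h, ?_⟩
          rcases eq_or_lt_of_le h with rfl | hxz
          · rfl
          · have e1 := hmono x z hxz
            have e2 := hmono z y hzy
            rw [hH] at e2
            exact BSeq.ext_antisymm e2 e1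
  refine ⟨?_, hdc, ?_⟩
  · intro hc
    have himg : Set.Ioo (ht x) w1 ⊆ ht '' {y : T | y ≤ x ∨ (x ≤ y ∧ H y = H x)} := by
      rintro ζ ⟨h1, h2⟩
      obtain ⟨y, hy1, hy2, hy3⟩ := hlev ζ h1 h2
      exact ⟨y, Or.inr ⟨hy2.le, hy3⟩, hy1⟩
    exact not_countable_Ioo (ht x) (htree.ht_lt x) ((hc.image ht).mono himg)
  · intro hHb b hb hsub
    obtain ⟨y, hyb, hyd⟩ := hHb b hb ((H x).dom + 1) (w1_isLimit.succ_lt hx)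
    have hcontra : ¬ ((H x).dom + 1 ≤ (H x).dom) := fun h =>
      absurd (lt_of_lt_of_le (lt_add_one _) h) (lt_irrefl _)
    have hne : (H y).dom ≠ (H x).dom := by
      intro h; rw [h] at hyd; exact hcontra hyd
    rcases hsub hyb with h | ⟨_, hH'⟩
    · rcases eq_or_lt_of_le h with rfl | hlt
      · exact hne rfl
      · exact hcontra (hyd.trans (hmono y x hlt).1)
    · exact hne (by rw [hH'])
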